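/- arXiv:2502.07214 — 2 statements merged into one kernel-verified Lean document; each statement's English description precedes it below -/
import Mathlib

section
/- All table entries are Pareto optimal: for every iteration ℓ : ℕ and every vertex v : V, if c ∈ D ℓ v then no walk from s to v with at most ℓ edges has cost dominating c. -/
open scoped NNReal

/-- A walk from `s` to `t`: a nonempty list of vertices starting at `s`,
ending at `t`, with `E u v` for every pair of consecutive vertices. -/
def IsWalk {V : Type*} (E : V → V → Prop) (s t : V) (l : List V) : Prop :=
  l ≠ [] ∧ l.head? = some s ∧ l.getLast? = some t ∧ l.Chain' E

/-- The multi-cost of a walk: componentwise sum of edge weights over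
consecutive pairs of vertices (a walk with no edges has cost `0`). -/
def walkCost {V : Type*} {k : ℕ} (w : V → V → Fin k → ℝ≥0) (l : List V) :
    Fin k → ℝ≥0 :=
  ((l.zip l.tail).map fun p => w p.1 p.2).sum

/-- The Pareto front: minimal elements of `S` w.r.t. the product order. -/
def paretoFront {k : ℕ} (S : Set (Fin k → ℝ≥0)) : Set (Fin k → ℝ≥0) :=
  {m | m ∈ S ∧ ¬ ∃ c ∈ S, c < m}

/-! By induction on `ℓ`, the cost of every walk from `s` to `v` with at most `ℓ` edges is
weakly dominated by some entry of `D ℓ v`: the tables stay finite, so every candidate of a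
relaxation round lies above one of its minimal elements. Each table is an antichain, so a walk
strictly dominating an entry `c` would yield an entry strictly below `c`. -/

section Pareto

variable {k : ℕ}

theorem paretoFront_subset (S : Set (Fin k → ℝ≥0)) : paretoFront S ⊆ S :=
  fun _ hm => hm.1

theorem not_lt_of_mem_paretoFront {S : Set (Fin k → ℝ≥0)} {m c : Fin k → ℝ≥0}
    (hm : m ∈ paretoFront S) (hc : c ∈ S) : ¬ c < m :=
  fun hlt => hm.2 ⟨c, hc, hlt⟩

theorem exists_mem_paretoFront_le {S : Set (Fin k → ℝ≥0)} (hS : S.Finite)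
    {x : Fin k → ℝ≥0} (hx : x ∈ S) : ∃ m ∈ paretoFront S, m ≤ x := by
  obtain ⟨m, ⟨hmS, hmx⟩, hmin⟩ :=
    (hS.subset fun y (hy : y ∈ S ∧ y ≤ x) => hy.1).exists_minimalFor id _ ⟨x, hx, le_rfl⟩
  refine ⟨m, ⟨hmS, ?_⟩, hmx⟩
  rintro ⟨c, hcS, hcm⟩
  exact hcm.not_ge (hmin ⟨hcS, hcm.le.trans hmx⟩ hcm.le)

end Pareto

section Walks

variable {V : Type*} {E : V → V → Prop} {k : ℕ} {s u v : V}

theorem walkCost_cons_cons (w : V → V → Fin k → ℝ≥0) (a b : V) (l : List V) :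
    walkCost w (a :: b :: l) = w a b + walkCost w (b :: l) := by
  simp [walkCost]

theorem walkCost_append_singleton (w : V → V → Fin k → ℝ≥0) {l : List V}
    (hl : l.getLast? = some u) (v : V) :
    walkCost w (l ++ [v]) = walkCost w l + w u v := by
  induction l with
  | nil => simp at hl
  | cons a t ih =>
    cases t with
    | nil =>
      obtain rfl : a = u := by simpa using hl
      simp [walkCost]
    | cons b t =>
      rw [List.getLast?_cons_cons] at hl
      simp only [List.cons_append] at ih ⊢
      rw [walkCost_cons_cons, ih hl, walkCost_cons_cons, add_assoc]

theorem IsWalk.eq_singleton {Q : List V} (hQ : IsWalk E s v Q) (hlen : Q.length ≤ 1) :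
    v = s ∧ Q = [s] := by
  obtain ⟨hne, hhead, hlast, -⟩ := hQ
  obtain ⟨a, rfl⟩ := List.length_eq_one_iff.mp
    (le_antisymm hlen (List.length_pos_iff.mpr hne))
  simp_all

theorem IsWalk.exists_eq_append_singleton {Q : List V} (hQ : IsWalk E s v Q)
    (hlen : 2 ≤ Q.length) : ∃ R u, Q = R ++ [v] ∧ IsWalk E s u R ∧ E u v := by
  obtain ⟨hne, hhead, hlast, hchain⟩ := hQ
  obtain rfl | ⟨R, x, rfl⟩ := Q.eq_nil_or_concat
  · exact absurd rfl hne
  simp only [List.concat_eq_append, List.getLast?_concat, Option.some.injEq] at hlast hhead hchain hlen ⊢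
  subst hlast
  have hR : R ≠ [] := by rintro rfl; simp at hlen
  obtain ⟨hRchain, -, hRx⟩ := List.isChain_append.mp hchain
  refine ⟨R, R.getLast hR, rfl, ⟨hR, ?_, List.getLast?_eq_some_getLast hR, hRchain⟩, ?_⟩
  · rwa [List.head?_append_of_ne_nil _ hR] at hhead
  · exact hRx _ (List.getLast?_eq_some_getLast hR) _ rfl

end Walks

def paretoCandidates {V : Type*} {k : ℕ} (E : V → V → Prop) (w : V → V → Fin k → ℝ≥0)
    (T : V → Set (Fin k → ℝ≥0)) (v : V) : Set (Fin k → ℝ≥0) :=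
  T v ∪ {x | ∃ u : V, E u v ∧ ∃ c ∈ T u, x = c + w u v}

theorem paretoCandidates_finite {V : Type*} [Finite V] {k : ℕ} (E : V → V → Prop)
    (w : V → V → Fin k → ℝ≥0) {T : V → Set (Fin k → ℝ≥0)} (hT : ∀ u, (T u).Finite) (v : V) :
    (paretoCandidates E w T v).Finite := by
  refine ((hT v).union (Set.finite_iUnion fun u => (hT u).image (· + w u v))).subset ?_
  rintro x (hx | ⟨u, -, c, hc, rfl⟩)
  · exact Or.inl hx
  · exact Or.inr (Set.mem_iUnion.mpr ⟨u, c, hc, rfl⟩)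

section ParetoTable

variable {V : Type*} {E : V → V → Prop} {k : ℕ} {w : V → V → Fin k → ℝ≥0} {s : V}
  {D : ℕ → V → Set (Fin k → ℝ≥0)}

theorem paretoTable_not_lt (hD0s : D 0 s = {0}) (hD0 : ∀ v, v ≠ s → D 0 v = ∅)
    (hDstep : ∀ ℓ v, D (ℓ + 1) v = paretoFront (paretoCandidates E w (D ℓ) v))
    {ℓ : ℕ} {v : V} {c d : Fin k → ℝ≥0} (hc : c ∈ D ℓ v) (hd : d ∈ D ℓ v) : ¬ d < c := by
  cases ℓ with
  | zero =>
    by_cases hv : v = s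
    · subst hv
      rw [hD0s] at hc hd
      rw [hc, hd]
      exact lt_irrefl 0
    · simp [hD0 v hv] at hc
  | succ ℓ =>
    rw [hDstep] at hc hd
    exact not_lt_of_mem_paretoFront hc (paretoFront_subset _ hd)

variable [Finite V]

theorem paretoTable_finite (hD0s : D 0 s = {0}) (hD0 : ∀ v, v ≠ s → D 0 v = ∅)
    (hDstep : ∀ ℓ v, D (ℓ + 1) v = paretoFront (paretoCandidates E w (D ℓ) v)) (ℓ : ℕ) (v : V) :
    (D ℓ v).Finite := by
  induction ℓ generalizing v with
  | zero =>
    by_cases hv : v = s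
    · simp [hv, hD0s]
    · simp [hD0 v hv]
  | succ ℓ ih =>
    rw [hDstep]
    exact (paretoCandidates_finite E w ih v).subset (paretoFront_subset _)

theorem exists_mem_paretoTable_le_walkCost (hD0s : D 0 s = {0})
    (hD0 : ∀ v, v ≠ s → D 0 v = ∅)
    (hDstep : ∀ ℓ v, D (ℓ + 1) v = paretoFront (paretoCandidates E w (D ℓ) v))
    {ℓ : ℕ} {v : V} {Q : List V} (hQ : IsWalk E s v Q) (hlen : Q.length - 1 ≤ ℓ) :
    ∃ d ∈ D ℓ v, d ≤ walkCost w Q := by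
  induction ℓ generalizing v Q with
  | zero =>
    obtain ⟨rfl, rfl⟩ := hQ.eq_singleton (by omega)
    exact ⟨0, hD0s ▸ rfl, zero_le⟩
  | succ ℓ ih =>
    have relax : ∀ {x}, x ∈ paretoCandidates E w (D ℓ) v → ∃ m ∈ D (ℓ + 1) v, m ≤ x :=
      fun hx => hDstep ℓ v ▸ exists_mem_paretoFront_le
        (paretoCandidates_finite E w (paretoTable_finite hD0s hD0 hDstep ℓ) v) hx
    by_cases hshort : Q.length - 1 ≤ ℓ
    · obtain ⟨d, hd, hdQ⟩ := ih hQ hshort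
      obtain ⟨m, hm, hmd⟩ := relax (Or.inl hd)
      exact ⟨m, hm, hmd.trans hdQ⟩
    · obtain ⟨R, u, rfl, hR, huv⟩ := hQ.exists_eq_append_singleton (by omega)
      obtain ⟨d, hd, hdR⟩ := ih hR (by simp at hlen; omega)
      obtain ⟨m, hm, hmd⟩ := relax (Or.inr ⟨u, huv, d, hd, rfl⟩)
      refine ⟨m, hm, ?_⟩
      rw [walkCost_append_singleton w hR.2.2.1]
      exact hmd.trans (add_le_add_left hdR _)

end ParetoTable

theorem paretoTable_entries_optimal_general {V : Type*} [Fintype V]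
    (E : V → V → Prop) {k : ℕ} (w : V → V → Fin k → ℝ≥0)
    (s : V) (D : ℕ → V → Set (Fin k → ℝ≥0))
    (hD0s : D 0 s = {0})
    (hD0 : ∀ v : V, v ≠ s → D 0 v = ∅)
    (hDstep : ∀ (ℓ : ℕ) (v : V), D (ℓ + 1) v =
      paretoFront (D ℓ v ∪ {x | ∃ u : V, E u v ∧ ∃ c ∈ D ℓ u, x = c + w u v})) :
    ∀ (ℓ : ℕ) (v : V), ∀ c ∈ D ℓ v,
      ¬ ∃ Q : List V, IsWalk E s v Q ∧ Q.length - 1 ≤ ℓ ∧ walkCost w Q < c := by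
  rintro ℓ v c hc ⟨Q, hQ, hlen, hQc⟩
  obtain ⟨d, hd, hdQ⟩ := exists_mem_paretoTable_le_walkCost hD0s hD0 hDstep hQ hlen
  exact paretoTable_not_lt hD0s hD0 hDstep hc hd (hdQ.trans_lt hQc)

/-- every table entry is Pareto optimal: no walk from `s` to
`v` with at most `ℓ` edges has cost dominating an element of `D ℓ v`. -/
theorem paretoTable_entries_optimal {V : Type*} [Fintype V]
    (E : V → V → Prop) [DecidableRel E] {k : ℕ} (w : V → V → Fin k → ℝ≥0)
    (s : V) (D : ℕ → V → Set (Fin k → ℝ≥0))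
    (hD0s : D 0 s = {0})
    (hD0 : ∀ v : V, v ≠ s → D 0 v = ∅)
    (hDstep : ∀ (ℓ : ℕ) (v : V), D (ℓ + 1) v =
      paretoFront (D ℓ v ∪ {x | ∃ u : V, E u v ∧ ∃ c ∈ D ℓ u, x = c + w u v})) :
    ∀ (ℓ : ℕ) (v : V), ∀ c ∈ D ℓ v,
      ¬ ∃ Q : List V, IsWalk E s v Q ∧ Q.length - 1 ≤ ℓ ∧ walkCost w Q < c :=
  paretoTable_entries_optimal_general E w s D hD0s hD0 hDstep
end

section
/- Pareto optimality is inherited by prefixes: if Q is a walk from s to t with at most ℓ + 1 edges whose last edge goes from u to t, and Q is Pareto optimal in the set of all walks from s to t with at most ℓ + 1 edges, then its prefix P from s to u is not dominated by any walk from s to u with at most ℓ edges, i.e., P is Pareto optimal in the set of all walks from s to u with at most ℓ edges. -/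
open scoped NNReal

section

variable {V : Type*} {k : ℕ} (w : V → V → Fin k → ℝ≥0)

lemma walkCost_cons (a b : V) (l : List V) :
    walkCost w (a :: b :: l) = w a b + walkCost w (b :: l) := by
  simp [walkCost]

lemma walkCost_concat (t : V) :
    ∀ {l : List V} {u : V}, l.getLast? = some u →
      walkCost w (l ++ [t]) = walkCost w l + w u t
  | [], _, h => by simp at h
  | [_], _, h => by
    obtain rfl := Option.some.inj h
    simp [walkCost]
  | a :: b :: l, u, h => by
    rw [List.cons_append, List.cons_append, walkCost_cons, ← List.cons_append,
      walkCost_concat t (by simpa using h), walkCost_cons, add_assoc]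

lemma walkCost_concat_lt_concat (t : V) {l l' : List V} {u : V}
    (hl : l.getLast? = some u) (hl' : l'.getLast? = some u)
    (h : walkCost w l < walkCost w l') :
    walkCost w (l ++ [t]) < walkCost w (l' ++ [t]) := by
  rw [walkCost_concat w t hl, walkCost_concat w t hl']
  exact add_lt_add_left h _

end

lemma IsWalk.concat {V : Type*} {E : V → V → Prop} {s u t : V} {l : List V}
    (h : IsWalk E s u l) (hE : E u t) : IsWalk E s t (l ++ [t]) := by
  obtain ⟨hne, hs, hu, hchain⟩ := h
  refine ⟨List.concat_ne_nil t l, by rwa [List.head?_append_of_ne_nil _ hne], by simp, ?_⟩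
  exact hchain.append (List.isChain_singleton t) (by simp [hu, hE])

theorem pareto_optimal_prefix_general {V : Type*}
    (E : V → V → Prop) {k : ℕ} (w : V → V → Fin k → ℝ≥0)
    (s u t : V) (ℓ : ℕ) (P Q : List V)
    (hP : IsWalk E s u P) (hE : E u t) (hQ : Q = P ++ [t])
    (hlen : Q.length - 1 ≤ ℓ + 1)
    (hopt : ¬ ∃ Q' : List V, (IsWalk E s t Q' ∧ Q'.length - 1 ≤ ℓ + 1) ∧
      walkCost w Q' < walkCost w Q) :
    P.length - 1 ≤ ℓ ∧
    ¬ ∃ R : List V, (IsWalk E s u R ∧ R.length - 1 ≤ ℓ) ∧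
      walkCost w R < walkCost w P := by
  subst hQ
  refine ⟨by simpa using hlen, ?_⟩
  rintro ⟨R, ⟨hR, hRlen⟩, hRP⟩
  exact hopt ⟨R ++ [t], ⟨hR.concat hE, by simp; omega⟩,
    walkCost_concat_lt_concat w t hR.2.2.1 hP.2.2.1 hRP⟩

/-- Pareto optimality is inherited by prefixes: if
`Q = P ++ [t]` has at most `ℓ + 1` edges and is Pareto optimal among walks
from `s` to `t` with at most `ℓ + 1` edges, then its prefix `P` from `s` to
`u` is Pareto optimal among walks from `s` to `u` with at most `ℓ` edges. -/
theorem pareto_optimal_prefix {V : Type*} [Fintype V]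
    (E : V → V → Prop) [DecidableRel E] {k : ℕ} (w : V → V → Fin k → ℝ≥0)
    (s u t : V) (ℓ : ℕ) (P Q : List V)
    (hP : IsWalk E s u P) (hE : E u t) (hQ : Q = P ++ [t])
    (hlen : Q.length - 1 ≤ ℓ + 1)
    (hopt : ¬ ∃ Q' : List V, (IsWalk E s t Q' ∧ Q'.length - 1 ≤ ℓ + 1) ∧
      walkCost w Q' < walkCost w Q) :
    P.length - 1 ≤ ℓ ∧
    ¬ ∃ R : List V, (IsWalk E s u R ∧ R.length - 1 ≤ ℓ) ∧
      walkCost w R < walkCost w P :=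
  pareto_optimal_prefix_general E w s u t ℓ P Q hP hE hQ hlen hopt
end
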